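/- arXiv:2104.06369 — 3 statements merged into one kernel-verified Lean document; each statement's English description precedes it below -/
import Mathlib

section
/- If a real Banach space X is almost isometric to a Gurariy space G, then X is also a Gurariy space. -/
/-!
Fix `ε > 0`, choose `η > 0` with `(1 + η)³ ≤ 1 + ε` and a surjective `η`-isometry `Φ : X → G`.
Given `E ⊆ F` and an isometric embedding `T : E → X`, the map `Φ ∘ T` is only an `η`-isometry into
`G`. Renorming `F` by the amalgamation norm `f ↦ inf_{e ∈ E} ‖Φ (T e)‖ + (1 + η) ‖f - e‖` turns it
into an isometry while distorting the norm of `F` by at most `1 + η`, so the Gurariy property of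
`G` extends it to `S : F → G`. Then `Φ⁻¹ ∘ S` extends `T`, with total distortion `(1 + η)³`.
-/

open TopologicalSpace

/-- `T` is an `ε`-isometry: `(1+ε)⁻¹‖x‖ ≤ ‖T x‖ ≤ (1+ε)‖x‖` for all `x`. -/
def IsEpsIsometry {X Y : Type*} [NormedAddCommGroup X] [NormedAddCommGroup Y]
    (ε : ℝ) (T : X → Y) : Prop :=
  ∀ x : X, (1 + ε)⁻¹ * ‖x‖ ≤ ‖T x‖ ∧ ‖T x‖ ≤ (1 + ε) * ‖x‖

/-- `X` and `Y` are almost isometric: for every `ε > 0` there is a surjective linear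
`ε`-isometry from `X` onto `Y`. -/
def AlmostIsometric (X Y : Type*) [NormedAddCommGroup X] [NormedSpace ℝ X]
    [NormedAddCommGroup Y] [NormedSpace ℝ Y] : Prop :=
  ∀ ε : ℝ, 0 < ε → ∃ T : X →ₗ[ℝ] Y, Function.Surjective T ∧ IsEpsIsometry ε ⇑T

/-- `X` is a Gurariy space: for every `ε > 0`, every pair of finite-dimensional normed
spaces `E ⊆ F` and every linear isometric embedding `T : E → X`, there is a linear
extension `S : F → X` of `T` which is an `ε`-isometry. -/
def IsGurariy (X : Type*) [NormedAddCommGroup X] [NormedSpace ℝ X] : Prop :=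
  ∀ ε : ℝ, 0 < ε →
    ∀ (F : Type) [NormedAddCommGroup F] [NormedSpace ℝ F] [FiniteDimensional ℝ F]
      (E : Subspace ℝ F) (T : E →ₗ[ℝ] X),
      (∀ e : E, ‖T e‖ = ‖e‖) →
      ∃ S : F →ₗ[ℝ] X, (∀ e : E, S e = T e) ∧ IsEpsIsometry ε ⇑S

/-- `Y` is an almost isometric ideal (a.i.-ideal) in `X`. -/
def IsAIIdeal {X : Type*} [NormedAddCommGroup X] [NormedSpace ℝ X]
    (Y : Subspace ℝ X) : Prop :=
  IsClosed (Y : Set X) ∧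
  ∀ ε : ℝ, 0 < ε → ∀ E : Subspace ℝ X, FiniteDimensional ℝ E →
    ∃ T : E →ₗ[ℝ] Y, (∀ e : E, (e : X) ∈ Y → ((T e : Y) : X) = (e : X)) ∧
      IsEpsIsometry ε ⇑T

open scoped NNReal

namespace IsEpsIsometry

variable {X Y Z : Type*} [NormedAddCommGroup X] [NormedAddCommGroup Y] [NormedAddCommGroup Z]
  {ε ε' : ℝ} {f : X → Y}

lemma mono (hf : IsEpsIsometry ε f) (hε : 0 ≤ ε) (hεε' : ε ≤ ε') : IsEpsIsometry ε' f := fun x =>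
  have h : 1 + ε ≤ 1 + ε' := by linarith
  ⟨(mul_le_mul_of_nonneg_right (inv_anti₀ (by linarith) h) (norm_nonneg x)).trans (hf x).1,
    (hf x).2.trans (mul_le_mul_of_nonneg_right h (norm_nonneg x))⟩

lemma comp {δ : ℝ} {g : Y → Z} (hg : IsEpsIsometry δ g) (hf : IsEpsIsometry ε f) (hδ : 0 ≤ δ) :
    IsEpsIsometry ((1 + δ) * (1 + ε) - 1) (g ∘ f) := fun x => by
  have hδ' : 0 ≤ 1 + δ := by linarith
  rw [add_sub_cancel, mul_inv, mul_assoc, mul_assoc]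
  exact ⟨(mul_le_mul_of_nonneg_left (hf x).1 (inv_nonneg.2 hδ')).trans (hg (f x)).1,
    (hg (f x)).2.trans (mul_le_mul_of_nonneg_left (hf x).2 hδ')⟩

lemma right_inv {g : Y → X} (hf : IsEpsIsometry ε f) (hε : 0 ≤ ε)
    (hg : Function.RightInverse g f) :
    IsEpsIsometry ε g := fun y => by
  have hε' : 0 < 1 + ε := by linarith
  have := hf (g y)
  rw [hg y] at this
  constructor
  · rw [inv_mul_le_iff₀ hε']; exact this.2
  · rw [← inv_mul_le_iff₀ hε']; exact this.1

lemma injective {𝓕 : Type*} [FunLike 𝓕 X Y] [AddMonoidHomClass 𝓕 X Y] {T : 𝓕}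
    (hT : IsEpsIsometry ε T) (hε : 0 ≤ ε) : Function.Injective T :=
  (injective_iff_map_eq_zero T).2 fun x hx => by
    have := (hT x).1
    rw [hx, norm_zero] at this
    exact norm_le_zero_iff.1 (nonpos_of_mul_nonpos_right this (by positivity))

end IsEpsIsometry

universe u

theorem Seminorm.exists_linearEquiv_norm_eq {F : Type u} [AddCommGroup F] [Module ℝ F]
    (p : Seminorm ℝ F) (hp : ∀ x, p x = 0 → x = 0) :
    ∃ (F' : Type u) (_ : NormedAddCommGroup F') (_ : NormedSpace ℝ F') (L : F ≃ₗ[ℝ] F'),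
      ∀ x, ‖L x‖ = p x := by
  let _ : NormedAddCommGroup F :=
    AddGroupNorm.toNormedAddCommGroup { p.toAddGroupSeminorm with eq_zero_of_map_eq_zero' := hp }
  exact ⟨F, _, ⟨fun c x => (map_smul_eq_mul p c x).le⟩, LinearEquiv.refl ℝ F, fun _ => rfl⟩

theorem exists_pos_one_add_pow_le (n : ℕ) {ε : ℝ} (hε : 0 < ε) :
    ∃ η > 0, (1 + η) ^ n ≤ 1 + ε := by
  have hcont : Continuous fun η : ℝ => (1 + η) ^ n := by fun_prop
  have hev : ∀ᶠ η in nhdsWithin (0:ℝ) (Set.Ioi 0), (1 + η) ^ n < 1 + ε :=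
    nhdsWithin_le_nhds ((hcont.tendsto 0).eventually (gt_mem_nhds (by simpa using hε)))
  obtain ⟨η, hη, hpos⟩ := (hev.and self_mem_nhdsWithin).exists
  exact ⟨η, hpos, hη.le⟩

section Amalgam

variable {F G : Type*} [NormedAddCommGroup F] [NormedSpace ℝ F]
  [NormedAddCommGroup G] [NormedSpace ℝ G] (E : Submodule ℝ F) (u : E →ₗ[ℝ] G) (c : ℝ≥0)

/-- The norm of the amalgamated sum of `F` and `G` over `E` (glued along `u`), restricted to `F`. -/
noncomputable def amalgamNorm (f : F) : ℝ :=
  ⨅ e : E, ‖u e‖ + c * ‖f - e‖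

lemma amalgamNorm_le (f : F) (e : E) : amalgamNorm E u c f ≤ ‖u e‖ + c * ‖f - e‖ :=
  ciInf_le ⟨0, by rintro _ ⟨e, rfl⟩; positivity⟩ e

lemma amalgamNorm_nonneg (f : F) : 0 ≤ amalgamNorm E u c f :=
  le_ciInf fun _ => by positivity

lemma amalgamNorm_add_le (f g : F) :
    amalgamNorm E u c (f + g) ≤ amalgamNorm E u c f + amalgamNorm E u c g := by
  refine le_ciInf_add_ciInf fun e₁ e₂ => (amalgamNorm_le E u c _ (e₁ + e₂)).trans ?_
  have hu : ‖u (e₁ + e₂)‖ ≤ ‖u e₁‖ + ‖u e₂‖ := by rw [map_add]; exact norm_add_le _ _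
  have hF : ‖f + g - ↑(e₁ + e₂)‖ ≤ ‖f - e₁‖ + ‖g - e₂‖ := by
    rw [Submodule.coe_add, add_sub_add_comm]; exact norm_add_le _ _
  nlinarith [c.2]

lemma amalgamNorm_smul_le (r : ℝ) (f : F) :
    amalgamNorm E u c (r • f) ≤ ‖r‖ * amalgamNorm E u c f := by
  unfold amalgamNorm
  rw [Real.mul_iInf_of_nonneg (norm_nonneg r)]
  refine le_ciInf fun e => (amalgamNorm_le E u c _ (r • e)).trans_eq ?_
  rw [map_smul, norm_smul, Submodule.coe_smul, ← smul_sub, norm_smul]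
  ring

noncomputable def amalgamSeminorm : Seminorm ℝ F :=
  Seminorm.ofSMulLE (amalgamNorm E u c)
    ((amalgamNorm_nonneg E u c 0).antisymm' (by simpa using amalgamNorm_le E u c 0 0))
    (amalgamNorm_add_le E u c) (amalgamNorm_smul_le E u c)

lemma amalgamSeminorm_apply (f : F) : amalgamSeminorm E u c f = amalgamNorm E u c f := rfl

variable {E u c}

lemma amalgamSeminorm_le_mul_norm (f : F) : amalgamSeminorm E u c f ≤ c * ‖f‖ := by
  simpa [amalgamSeminorm_apply] using amalgamNorm_le E u c f 0

lemma amalgamSeminorm_coe (hu : ∀ e, ‖u e‖ ≤ c * ‖e‖) (e : E) :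
    amalgamSeminorm E u c e = ‖u e‖ := by
  rw [amalgamSeminorm_apply]
  refine le_antisymm (by simpa using amalgamNorm_le E u c e e) (le_ciInf fun e' => ?_)
  calc ‖u e‖ = ‖u e' + u (e - e')‖ := by rw [← map_add, add_sub_cancel]
    _ ≤ ‖u e'‖ + c * ‖(e : F) - e'‖ := (norm_add_le _ _).trans (add_le_add_right (hu _) _)

lemma mul_norm_le_amalgamSeminorm {a : ℝ} (ha : 0 ≤ a) (hac : a ≤ c)
    (hu : ∀ e, a * ‖e‖ ≤ ‖u e‖) (f : F) : a * ‖f‖ ≤ amalgamSeminorm E u c f := by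
  rw [amalgamSeminorm_apply]
  refine le_ciInf fun e => ?_
  have htri : ‖f‖ ≤ ‖(e : F)‖ + ‖f - e‖ := norm_le_norm_add_norm_sub' f e
  have := hu e
  rw [Submodule.coe_norm] at this
  nlinarith [norm_nonneg (f - e)]

end Amalgam

theorem IsGurariy.exists_extension_of_isEpsIsometry {G : Type*} [NormedAddCommGroup G]
    [NormedSpace ℝ G] (hG : IsGurariy G) {δ ε : ℝ} (hδ : 0 ≤ δ) (hε : 0 < ε)
    {F : Type} [NormedAddCommGroup F] [NormedSpace ℝ F] [FiniteDimensional ℝ F]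
    (E : Subspace ℝ F) (u : E →ₗ[ℝ] G) (hu : IsEpsIsometry δ u) :
    ∃ S : F →ₗ[ℝ] G, (∀ e : E, S e = u e) ∧ IsEpsIsometry ((1 + ε) * (1 + δ) - 1) S := by
  let c : ℝ≥0 := ⟨1 + δ, by positivity⟩
  have hc : (1 : ℝ) ≤ c := le_add_of_nonneg_right hδ
  have hlow := mul_norm_le_amalgamSeminorm (u := u) (c := c) (by positivity)
    ((inv_le_one_of_one_le₀ hc).trans hc) fun e => (hu e).1
  obtain ⟨F', _, _, L, hL⟩ := (amalgamSeminorm E u c).exists_linearEquiv_norm_eq fun f hf =>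
    norm_le_zero_iff.1 (nonpos_of_mul_nonpos_right ((hlow f).trans_eq hf) (by positivity))
  have : FiniteDimensional ℝ F' := Module.Finite.equiv L
  have hLu : ∀ e' : E.map (L : F →ₗ[ℝ] F'), ‖u ((L.submoduleMap E).symm e')‖ = ‖e'‖ := by
    intro e'
    obtain ⟨e, rfl⟩ := (L.submoduleMap E).surjective e'
    rw [LinearEquiv.symm_apply_apply, Submodule.coe_norm, LinearEquiv.submoduleMap_apply, hL,
      amalgamSeminorm_coe fun e => (hu e).2]
  obtain ⟨S, hSext, hS⟩ := hG ε hε F' _ (u ∘ₗ (L.submoduleMap E).symm.toLinearMap) hLu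
  have hLδ : IsEpsIsometry δ L := fun f => hL f ▸ ⟨hlow f, amalgamSeminorm_le_mul_norm f⟩
  refine ⟨S ∘ₗ L, fun e => by simpa using hSext (L.submoduleMap E e), hS.comp hLδ hε.le⟩

theorem almost_isometric_to_gurariy_general
    (X : Type*) [NormedAddCommGroup X] [NormedSpace ℝ X]
    (G : Type*) [NormedAddCommGroup G] [NormedSpace ℝ G]
    (hG : IsGurariy G) (h : AlmostIsometric X G) :
    IsGurariy X := by
  intro ε hε F _ _ _ E T hT
  obtain ⟨η, hη, hηε⟩ := exists_pos_one_add_pow_le 3 hε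
  obtain ⟨Φ, hΦsurj, hΦ⟩ := h η hη
  obtain ⟨S, hSext, hS⟩ := hG.exists_extension_of_isEpsIsometry hη.le hη E (Φ ∘ₗ T)
    fun e => hT e ▸ hΦ (T e)
  let Ψ := LinearEquiv.ofBijective Φ ⟨hΦ.injective hη.le, hΦsurj⟩
  have hΨ : IsEpsIsometry η Ψ.symm := hΦ.right_inv hη.le Ψ.apply_symm_apply
  refine ⟨Ψ.symm ∘ₗ S, fun e => Ψ.symm_apply_eq.2 (hSext e), ?_⟩
  exact (hΨ.comp hS hη.le).mono (by nlinarith) (by nlinarith)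

/-- If a Banach space `X` is almost isometric to a Gurariy space `G`,
then `X` is also a Gurariy space. -/
theorem almost_isometric_to_gurariy
    (X : Type*) [NormedAddCommGroup X] [NormedSpace ℝ X] [CompleteSpace X]
    (G : Type*) [NormedAddCommGroup G] [NormedSpace ℝ G] [CompleteSpace G]
    (hG : IsGurariy G) (h : AlmostIsometric X G) :
    IsGurariy X :=
  almost_isometric_to_gurariy_general X G hG h
end

section
/- Let X be a Gurariy space and let Y ⊆ X be an infinite-dimensional closed linear subspace such that for every x ∈ X \ Y, the subspace Y is an almost isometric ideal in span{x, Y} (the closed linear span of Y and x). Then Y is a Gurariy space. -/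
open TopologicalSpace

section Helpers

variable {W₁ W₂ : Type*} [NormedAddCommGroup W₁] [NormedAddCommGroup W₂]

private lemma isEps_of_norm_eq {ε : ℝ} (hε : 0 ≤ ε) {T : W₁ → W₂}
    (h : ∀ x, ‖T x‖ = ‖x‖) : IsEpsIsometry ε T := by
  intro x
  rw [h]
  have h1 : (0:ℝ) ≤ ‖x‖ := norm_nonneg x
  have hpos : (0:ℝ) < 1 + ε := by linarith
  have h2 : (1+ε)⁻¹ ≤ 1 := by
    rw [inv_le_one_iff₀]; right; linarith
  constructor
  · nlinarith [inv_nonneg.mpr hpos.le]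
  · nlinarith

end Helpers

section Push

variable {X : Type*} [NormedAddCommGroup X] [NormedSpace ℝ X]

/-- Push a finite-dimensional subspace `G ≤ Y ⊔ ℝ∙x` into `Y`, fixing the part of `G`
inside `Y`. -/
private lemma push_lemma (Y : Subspace ℝ X)
    (h : ∀ x : X, x ∉ Y → IsAIIdeal (Submodule.comap (Y ⊔ (ℝ ∙ x)).subtype Y))
    (x : X) (G : Subspace ℝ X) (hfd : FiniteDimensional ℝ G)
    (hG : G ≤ Y ⊔ (ℝ ∙ x)) {δ : ℝ} (hδ : 0 < δ) :
    ∃ U : G →ₗ[ℝ] Y, (∀ g : G, (g : X) ∈ Y → ((U g : Y) : X) = (g : X)) ∧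
      IsEpsIsometry δ ⇑U := by
  by_cases hx : x ∈ Y
  · have hZY : Y ⊔ (ℝ ∙ x) = Y := by
      rw [sup_eq_left]
      exact (Submodule.span_singleton_le_iff_mem x Y).mpr hx
    have hGY : G ≤ Y := hZY ▸ hG
    exact ⟨Submodule.inclusion hGY, fun g _ => rfl,
      isEps_of_norm_eq hδ.le fun g => rfl⟩
  · obtain ⟨-, hai⟩ := h x hx
    have hGZ : G ≤ Y ⊔ (ℝ ∙ x) := hG
    have hYZ : Y ≤ Y ⊔ (ℝ ∙ x) := le_sup_left
    set Z : Subspace ℝ X := Y ⊔ (ℝ ∙ x) with hZdef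
    let eG : (Submodule.comap Z.subtype G) ≃ₗ[ℝ] G :=
      Submodule.comapSubtypeEquivOfLe hGZ
    let eY : (Submodule.comap Z.subtype Y) ≃ₗ[ℝ] Y :=
      Submodule.comapSubtypeEquivOfLe hYZ
    haveI : FiniteDimensional ℝ (Submodule.comap Z.subtype G) :=
      LinearEquiv.finiteDimensional eG.symm
    obtain ⟨T₀, hfix, hiso⟩ := hai δ hδ (Submodule.comap Z.subtype G) this
    refine ⟨(eY.toLinearMap.comp T₀).comp eG.symm.toLinearMap, ?_, ?_⟩
    · intro g hg
      have hgm : (eG.symm g : Z) ∈ Submodule.comap Z.subtype Y := by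
        rw [Submodule.mem_comap]
        exact hg
      have hZeq := hfix (eG.symm g) hgm
      show ((eY (T₀ (eG.symm g)) : Y) : X) = (g : X)
      calc ((eY (T₀ (eG.symm g)) : Y) : X)
          = (((T₀ (eG.symm g) : Submodule.comap Z.subtype Y) : Z) : X) := rfl
        _ = ((eG.symm g : Z) : X) := by rw [hZeq]
        _ = (g : X) := rfl
    · intro g
      have e1 : ‖eG.symm g‖ = ‖g‖ := rfl
      have e2 : ‖eY (T₀ (eG.symm g))‖ = ‖T₀ (eG.symm g)‖ := rfl
      have hg := hiso (eG.symm g)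
      constructor
      · show (1+δ)⁻¹ * ‖g‖ ≤ ‖eY (T₀ (eG.symm g))‖
        rw [e2, ← e1]; exact hg.1
      · show ‖eY (T₀ (eG.symm g))‖ ≤ (1+δ) * ‖g‖
        rw [e2, ← e1]; exact hg.2

end Push

section Renorm

/-- Inf-convolution renorming: given `φ : E' → W` with `κ⁻¹‖u‖ ≤ ‖φ u‖ ≤ κ‖u‖`, there is a
norm-like function on all of `F` extending `u ↦ ‖φ u‖` and `κ`-equivalent to the norm. -/
private lemma renorm_exists {F W : Type*} [NormedAddCommGroup F] [NormedSpace ℝ F]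
    [NormedAddCommGroup W] [NormedSpace ℝ W]
    (E' : Subspace ℝ F) (φ : E' →ₗ[ℝ] W) (κ : ℝ) (hκ : 1 ≤ κ)
    (hl : ∀ u : E', κ⁻¹ * ‖u‖ ≤ ‖φ u‖) (hu : ∀ u : E', ‖φ u‖ ≤ κ * ‖u‖) :
    ∃ N : F → ℝ,
      (∀ u : E', N ↑u = ‖φ u‖) ∧
      (∀ f : F, κ⁻¹ * ‖f‖ ≤ N f) ∧ (∀ f : F, N f ≤ κ * ‖f‖) ∧
      (∀ f g : F, N (f + g) ≤ N f + N g) ∧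
      (∀ (c : ℝ) (f : F), N (c • f) ≤ |c| * N f) := by
  have hκ0 : (0:ℝ) < κ := lt_of_lt_of_le one_pos hκ
  have hκi : (0:ℝ) < κ⁻¹ := inv_pos.mpr hκ0
  set R : F → Set ℝ := fun f => Set.range fun e : E' => ‖φ e‖ + κ * ‖f - ↑e‖ with hR
  set N : F → ℝ := fun f => sInf (R f) with hN
  have hne : ∀ f : F, (R f).Nonempty := fun f => ⟨_, ⟨0, rfl⟩⟩
  have hlow : ∀ f : F, ∀ a ∈ R f, κ⁻¹ * ‖f‖ ≤ a := by
    rintro f a ⟨e, rfl⟩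
    have h1 : κ⁻¹ * ‖(e:F)‖ ≤ ‖φ e‖ := by
      have := hl e; rwa [Submodule.coe_norm] at this
    have h2 : κ⁻¹ * ‖f - ↑e‖ ≤ κ * ‖f - ↑e‖ := by
      have h3 : κ⁻¹ ≤ κ := by
        have : κ⁻¹ ≤ 1 := by rw [inv_le_one_iff₀]; right; exact hκ
        linarith
      nlinarith [norm_nonneg (f - (e:F))]
    have h3 : ‖f‖ ≤ ‖(e:F)‖ + ‖f - ↑e‖ := by
      have := norm_add_le (e:F) (f - ↑e)
      simpa using this
    nlinarith [norm_nonneg (f - (e:F)), norm_nonneg ((e:F))]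
  have hbdd : ∀ f : F, BddBelow (R f) := fun f => ⟨κ⁻¹ * ‖f‖, fun a ha => hlow f a ha⟩
  have hNl : ∀ f : F, κ⁻¹ * ‖f‖ ≤ N f := fun f => le_csInf (hne f) (hlow f)
  have hNle : ∀ f : F, ∀ a ∈ R f, N f ≤ a := fun f a ha => csInf_le (hbdd f) ha
  have hNu : ∀ f : F, N f ≤ κ * ‖f‖ := by
    intro f
    have : ‖φ 0‖ + κ * ‖f - ((0 : E'):F)‖ ∈ R f := ⟨0, rfl⟩
    have h0 := hNle f _ this
    simpa using h0
  have hNres : ∀ u : E', N ↑u = ‖φ u‖ := by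
    intro u
    apply le_antisymm
    · have : ‖φ u‖ + κ * ‖(↑u:F) - ↑u‖ ∈ R ↑u := ⟨u, rfl⟩
      have h0 := hNle ↑u _ this
      simpa using h0
    · apply le_csInf (hne ↑u)
      rintro a ⟨e, rfl⟩
      dsimp only
      have h1 : ‖φ u‖ ≤ ‖φ e‖ + ‖φ (u - e)‖ := by
        have : φ u = φ e + φ (u - e) := by rw [← map_add]; congr 1; abel
        rw [this]; exact norm_add_le _ _
      have h2 : ‖φ (u - e)‖ ≤ κ * ‖(↑u:F) - ↑e‖ := by
        have := hu (u - e)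
        rwa [Submodule.coe_norm, Submodule.coe_sub] at this
      linarith
  refine ⟨N, hNres, hNl, hNu, ?_, ?_⟩
  · intro f g
    have step : ∀ a ∈ R f, ∀ b ∈ R g, N (f + g) ≤ a + b := by
      rintro _ ⟨e, rfl⟩ _ ⟨e', rfl⟩
      dsimp only
      have hmem : ‖φ (e + e')‖ + κ * ‖(f + g) - ↑(e + e')‖ ∈ R (f + g) := ⟨e + e', rfl⟩
      refine (hNle _ _ hmem).trans ?_
      have t1 : ‖φ (e + e')‖ ≤ ‖φ e‖ + ‖φ e'‖ := by
        rw [map_add]; exact norm_add_le _ _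
      have t2 : ‖(f + g) - ↑(e + e')‖ ≤ ‖f - ↑e‖ + ‖g - ↑e'‖ := by
        have heq : (f + g) - (((e : F)) + ((e' : F))) = (f - ↑e) + (g - ↑e') := by abel
        rw [Submodule.coe_add, heq]
        exact norm_add_le _ _
      nlinarith
    have h1 : ∀ a ∈ R f, N (f + g) - a ≤ N g :=
      fun a ha => le_csInf (hne g) fun b hb => by linarith [step a ha b hb]
    have h2 : N (f + g) - N g ≤ N f :=
      le_csInf (hne f) fun a ha => by linarith [h1 a ha]
    linarith
  · intro c f
    rcases eq_or_ne c 0 with rfl | hc0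
    · have h0 : N ((0:ℝ) • f) ≤ 0 := by
        have := hNu ((0:ℝ) • f)
        simpa using this
      simpa using h0
    · have hc : (0:ℝ) < |c| := abs_pos.mpr hc0
      have hstep : ∀ a ∈ R f, N (c • f) ≤ |c| * a := by
        rintro _ ⟨e, rfl⟩
        have hmem : ‖φ (c • e)‖ + κ * ‖c • f - ↑(c • e)‖ ∈ R (c • f) := ⟨c • e, rfl⟩
        refine (hNle _ _ hmem).trans_eq ?_
        rw [map_smul, norm_smul, Submodule.coe_smul, ← smul_sub, norm_smul,
          Real.norm_eq_abs]
        ring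
      have hdiv : N (c • f) / |c| ≤ N f := by
        apply le_csInf (hne f)
        intro a ha
        rw [div_le_iff₀ hc]
        calc N (c • f) ≤ |c| * a := hstep a ha
          _ = a * |c| := by ring
      calc N (c • f) = (N (c • f) / |c|) * |c| := by field_simp
        _ ≤ N f * |c| := by
            apply mul_le_mul_of_nonneg_right hdiv hc.le
        _ = |c| * N f := by ring

end Renorm

section Key

open Module

set_option maxHeartbeats 2000000 in
private theorem key_induction {X : Type*} [NormedAddCommGroup X] [NormedSpace ℝ X]
    (hX : IsGurariy X) (Y : Subspace ℝ X)
    (h : ∀ x : X, x ∉ Y → IsAIIdeal (Submodule.comap (Y ⊔ (ℝ ∙ x)).subtype Y)) :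
    ∀ n : ℕ, ∀ ε : ℝ, 0 < ε →
      ∀ (F : Type) [inst1 : NormedAddCommGroup F] [inst2 : NormedSpace ℝ F]
        [inst3 : FiniteDimensional ℝ F] (E : Subspace ℝ F),
        finrank ℝ F ≤ finrank ℝ E + n →
        ∀ T : E →ₗ[ℝ] Y, (∀ e : E, ‖T e‖ = ‖e‖) →
        ∃ S : F →ₗ[ℝ] Y, (∀ e : E, S ↑e = T e) ∧ IsEpsIsometry ε ⇑S := by
  intro n
  induction n with
  | zero =>
    intro ε hε F _ _ _ E hrank T hT
    have hEtop : E = ⊤ :=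
      Submodule.eq_top_of_finrank_eq
        (le_antisymm (Submodule.finrank_le E) (by simpa using hrank))
    let e := LinearEquiv.ofTop E hEtop
    have hcoe : ∀ f : F, ((e.symm f : E) : F) = f := fun f =>
      LinearEquiv.coe_ofTop_symm_apply E f
    refine ⟨T.comp e.symm.toLinearMap, fun v => ?_, ?_⟩
    · show T (e.symm ↑v) = T v
      congr 1
    · apply isEps_of_norm_eq hε.le
      intro f
      show ‖T (e.symm f)‖ = ‖f‖
      rw [hT, Submodule.coe_norm, hcoe]
  | succ n IH =>
    intro ε hε F inst1 inst2 inst3 E hrank T hT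
    by_cases hrank' : finrank ℝ F ≤ finrank ℝ E + n
    · exact IH ε hε F E hrank' T hT
    have hEne : E ≠ ⊤ := by
      intro htop
      apply hrank'
      have : finrank ℝ E = finrank ℝ F := by
        rw [htop]; exact finrank_top ℝ F
      omega
    obtain ⟨f, hf⟩ : ∃ f : F, f ∉ E := by
      by_contra hcon
      push_neg at hcon
      exact hEne (Submodule.eq_top_iff'.mpr hcon)
    set η : ℝ := min (ε/7) 1 with hηdef
    have hη0 : 0 < η := lt_min (by linarith) one_pos
    have hη1 : η ≤ 1 := min_le_right _ _
    have hη7 : 7 * η ≤ ε := by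
      have h2 : η ≤ ε / 7 := min_le_left (ε/7) 1
      linarith
    have he1 : η * η ≤ η := by nlinarith
    have he2 : η * η * η ≤ η := by nlinarith
    have hcube : (1+η)^3 ≤ 1+ε := by nlinarith [he1, he2]
    have h1η : (0:ℝ) < 1 + η := by linarith
    -- Step 1: extend into X using that X is Gurariy
    have hTX : ∀ e : E, ‖(Y.subtype.comp T) e‖ = ‖e‖ := by
      intro e
      show ‖((T e : Y) : X)‖ = ‖e‖
      rw [← Submodule.coe_norm, hT]
    obtain ⟨S₀, hS₀ext, hS₀iso⟩ := hX η hη0 F E (Y.subtype.comp T) hTX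
    -- The one-dimensional extension E' of E inside F
    set E' : Subspace ℝ F := E ⊔ (ℝ ∙ f) with hE'def
    have hEE' : E ≤ E' := le_sup_left
    have hrankE' : finrank ℝ F ≤ finrank ℝ E' + n := by
      have hlt : E < E' := by
        refine lt_of_le_of_ne hEE' fun hEq => hf ?_
        rw [hEq]
        exact Submodule.mem_sup_right (Submodule.mem_span_singleton_self f)
      have := Submodule.finrank_lt_finrank_of_lt hlt
      omega
    -- G = S₀(E') ≤ Y ⊔ ℝ∙(S₀ f)
    set L : E' →ₗ[ℝ] X := S₀.comp E'.subtype with hLdef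
    have hGx : LinearMap.range L ≤ Y ⊔ (ℝ ∙ (S₀ f)) := by
      rintro _ ⟨u, rfl⟩
      obtain ⟨y, hy, z, hz, huv⟩ := Submodule.mem_sup.mp u.2
      obtain ⟨t, rfl⟩ := Submodule.mem_span_singleton.mp hz
      have hLu : L u = S₀ y + t • S₀ f := by
        show S₀ ↑u = S₀ y + t • S₀ f
        rw [← huv, map_add, map_smul]
      rw [hLu]
      apply Submodule.add_mem_sup
      · have := hS₀ext ⟨y, hy⟩
        have h2 : S₀ y = ((T ⟨y, hy⟩ : Y) : X) := this
        rw [h2]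
        exact (T ⟨y, hy⟩).2
      · exact Submodule.smul_mem _ t (Submodule.mem_span_singleton_self _)
    obtain ⟨U, hUfix, hUiso⟩ :=
      push_lemma Y h (S₀ f) (LinearMap.range L) inferInstance hGx hη0
    set T'' : E' →ₗ[ℝ] Y := U.comp L.rangeRestrict with hT''def
    set κ : ℝ := (1+η)^2 with hκdef
    have hκ1 : (1:ℝ) ≤ κ := by nlinarith
    have hκ0 : (0:ℝ) < κ := by nlinarith
    have hLnorm : ∀ u : E', ‖L.rangeRestrict u‖ = ‖S₀ ↑u‖ := fun u => rfl
    have hT''l : ∀ u : E', κ⁻¹ * ‖u‖ ≤ ‖T'' u‖ := by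
      intro u
      have h1 := (hUiso (L.rangeRestrict u)).1
      have h2 := (hS₀iso ↑u).1
      rw [hLnorm] at h1
      have hS₀nn : (0:ℝ) ≤ ‖S₀ (↑u:F)‖ := norm_nonneg _
      have hinv : (0:ℝ) < (1+η)⁻¹ := inv_pos.mpr h1η
      have hκinv : κ⁻¹ = (1+η)⁻¹ * (1+η)⁻¹ := by
        rw [hκdef, sq, mul_inv]
      show κ⁻¹ * ‖u‖ ≤ ‖U (L.rangeRestrict u)‖
      have huc : ‖u‖ = ‖(↑u:F)‖ := Submodule.coe_norm u
      calc κ⁻¹ * ‖u‖ = (1+η)⁻¹ * ((1+η)⁻¹ * ‖(↑u:F)‖) := by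
            rw [hκinv, huc]; ring
        _ ≤ (1+η)⁻¹ * ‖S₀ (↑u:F)‖ := by
            apply mul_le_mul_of_nonneg_left h2 hinv.le
        _ ≤ ‖U (L.rangeRestrict u)‖ := h1
    have hT''u : ∀ u : E', ‖T'' u‖ ≤ κ * ‖u‖ := by
      intro u
      have h1 := (hUiso (L.rangeRestrict u)).2
      have h2 := (hS₀iso ↑u).2
      rw [hLnorm] at h1
      show ‖U (L.rangeRestrict u)‖ ≤ κ * ‖u‖
      have huc : ‖u‖ = ‖(↑u:F)‖ := Submodule.coe_norm u
      calc ‖U (L.rangeRestrict u)‖ ≤ (1+η) * ‖S₀ (↑u:F)‖ := h1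
        _ ≤ (1+η) * ((1+η) * ‖(↑u:F)‖) := by
            apply mul_le_mul_of_nonneg_left h2 h1η.le
        _ = κ * ‖u‖ := by rw [hκdef, huc]; ring
    -- extension property of T''
    have hT''ext : ∀ e : E, T'' (Submodule.inclusion hEE' e) = T e := by
      intro e
      have hc : (L.rangeRestrict (Submodule.inclusion hEE' e) : X) = ((T e : Y) : X) := by
        show S₀ ↑e = ((T e : Y) : X)
        exact hS₀ext e
      have hmem : ((L.rangeRestrict (Submodule.inclusion hEE' e) : X)) ∈ Y := by
        rw [hc]; exact (T e).2
      have := hUfix (L.rangeRestrict (Submodule.inclusion hEE' e)) hmem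
      apply Subtype.ext
      show ((U (L.rangeRestrict (Submodule.inclusion hEE' e)) : Y) : X) = ((T e : Y) : X)
      rw [this, hc]
    -- renorm F
    obtain ⟨N, hNres, hNl, hNu, hNadd, hNsmul⟩ :=
      renorm_exists E' T'' κ hκ1 hT''l hT''u
    have hN0 : N 0 = 0 := by
      apply le_antisymm
      · have := hNu 0; simpa using this
      · have := hNl 0; simpa using this
    have hNneg : ∀ g : F, N (-g) = N g := by
      intro g
      apply le_antisymm
      · have h1 := hNsmul (-1) g
        rw [neg_one_smul] at h1
        simpa using h1
      · have h1 := hNsmul (-1) (-g)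
        rw [neg_one_smul, neg_neg] at h1
        simpa using h1
    have hNzero : ∀ g : F, N g = 0 → g = 0 := by
      intro g hg
      have hgl := hNl g
      rw [hg] at hgl
      have hκi : (0:ℝ) < κ⁻¹ := inv_pos.mpr hκ0
      have hgn : ‖g‖ ≤ 0 := by nlinarith [norm_nonneg g]
      exact norm_le_zero_iff.mp hgn
    have h1ε : (0:ℝ) < 1 + ε := by linarith
    have hfin : ∀ S' : F →ₗ[ℝ] Y,
        (∀ x : F, (1+η)⁻¹ * N x ≤ ‖S' x‖ ∧ ‖S' x‖ ≤ (1+η) * N x) →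
        IsEpsIsometry ε ⇑S' := by
      intro S' hS' x
      obtain ⟨hl', hu'⟩ := hS' x
      have hNlx := hNl x
      have hNux := hNu x
      have hx0 : (0:ℝ) ≤ ‖x‖ := norm_nonneg x
      have hS0 : (0:ℝ) ≤ ‖S' x‖ := norm_nonneg _
      have hN0x : (0:ℝ) ≤ N x := le_trans (mul_nonneg (inv_nonneg.mpr hκ0.le) hx0) hNlx
      have hNx : ‖x‖ ≤ κ * N x := by rw [← inv_mul_le_iff₀ hκ0]; exact hNlx
      constructor
      · rw [inv_mul_le_iff₀ h1ε]
        have hNx2 : N x ≤ (1+η) * ‖S' x‖ := by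
          rw [← inv_mul_le_iff₀ h1η]; exact hl'
        nlinarith [mul_le_mul_of_nonneg_left hNx2 hκ0.le, hcube, hκdef, hS0]
      · have hc1 : ‖S' x‖ ≤ (1+η) * (κ * ‖x‖) :=
          le_trans hu' (mul_le_mul_of_nonneg_left hNux h1η.le)
        nlinarith [hcube, hx0, hκdef, hS0]
    let gn : AddGroupNorm F :=
      { toFun := N
        map_zero' := hN0
        add_le' := hNadd
        neg' := hNneg
        eq_zero_of_map_eq_zero' := fun g hg => hNzero g hg }
    let inst1' : NormedAddCommGroup F := gn.toNormedAddCommGroup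
    let inst2' : @NormedSpace ℝ F _ inst1'.toSeminormedAddCommGroup :=
      @NormedSpace.mk ℝ F _ inst1'.toSeminormedAddCommGroup inst2.toModule
        (fun a b => by rw [Real.norm_eq_abs]; exact hNsmul a b)
    obtain ⟨S', hS'ext, hS'iso⟩ :=
      @IH η hη0 F inst1' inst2' inst3 E' hrankE' T'' (fun u => (hNres u).symm)
    refine ⟨S', ?_, hfin S' (fun x => ⟨(hS'iso x).1, (hS'iso x).2⟩)⟩
    intro e
    have h1 := hS'ext (Submodule.inclusion hEE' e)
    have h2 : ((Submodule.inclusion hEE' e : E') : F) = (e : F) := rfl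
    rw [h2] at h1
    rw [h1, hT''ext]

end Key

/-- If `X` is a Gurariy space and `Y ⊆ X` is an infinite-dimensional closed subspace
such that for every `x ∈ X \ Y`, `Y` is an a.i.-ideal in `span{x, Y}`,
then `Y` is a Gurariy space. -/
theorem aiIdeal_in_one_dim_extensions_gurariy
    (X : Type*) [NormedAddCommGroup X] [NormedSpace ℝ X] [CompleteSpace X]
    (hX : IsGurariy X) (Y : Subspace ℝ X) (hclosed : IsClosed (Y : Set X))
    (hinf : ¬ FiniteDimensional ℝ Y)
    (h : ∀ x : X, x ∉ Y →
      IsAIIdeal (Submodule.comap (Y ⊔ (ℝ ∙ x)).subtype Y)) :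
    IsGurariy Y := by
  intro ε hε F _ _ _ E T hT
  exact key_induction hX Y h (Module.finrank ℝ F) ε hε F E
    (by omega) T hT
end

section
/- Let G be a separable Gurariy space. Then G has no nontrivial M-summand; that is, there do not exist nonzero closed linear subspaces M and N of G with G = M ⊕ N (algebraic direct sum) such that ‖m + n‖ = max(‖m‖, ‖n‖) for all m ∈ M and n ∈ N. -/
/-! Take unit vectors `m ∈ M`, `n ∈ N`: they span an isometric copy of `ℓ∞² = ℝ × ℝ` (products
carry the sup norm). Embed `ℓ∞²` into `ℓ∞³` by `(a, b) ↦ (a, b, (a + b) / 2)` and extend to an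
almost isometry `S` of `ℓ∞³` into `G`. The vector `f = (½, ½, 1)` has norm `1` but lies at
distance `½` from the images of both `m` and `n`, whereas in an `M`-decomposition every `g`
satisfies `‖g‖ ≤ max ‖g - m‖ ‖g - n‖`. -/

open TopologicalSpace

theorem IsGurariy.exists_extension {X : Type*} [NormedAddCommGroup X] [NormedSpace ℝ X]
    (hX : IsGurariy X) {ε : ℝ} (hε : 0 < ε) {E F : Type} [NormedAddCommGroup E]
    [NormedSpace ℝ E] [NormedAddCommGroup F] [NormedSpace ℝ F] [FiniteDimensional ℝ F]
    (J : E →ₗᵢ[ℝ] F) (T : E →ₗᵢ[ℝ] X) :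
    ∃ S : F →ₗ[ℝ] X, (∀ e, S (J e) = T e) ∧ IsEpsIsometry ε S := by
  let e := LinearEquiv.ofInjective J.toLinearMap J.injective
  have hJe : ∀ y, J (e.symm y) = y := LinearEquiv.ofInjective_symm_apply _
  obtain ⟨S, hST, hS⟩ := hX ε hε F _ (T.toLinearMap ∘ₗ e.symm.toLinearMap) fun y => by
    simp only [LinearMap.coe_comp, LinearEquiv.coe_coe, Function.comp_apply,
      LinearIsometry.coe_toLinearMap, LinearIsometry.norm_map, ← hJe y, Submodule.coe_norm]
  refine ⟨S, fun x => ?_, hS⟩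
  simpa [e, LinearEquiv.ofInjective_apply] using hST (e x)

noncomputable def midpointEmbedding : ℝ × ℝ →ₗᵢ[ℝ] ℝ × ℝ × ℝ where
  toFun x := (x.1, x.2, (x.1 + x.2) / 2)
  map_add' x y := by simp only [Prod.fst_add, Prod.snd_add, Prod.mk_add_mk]; ring_nf
  map_smul' c x := by
    simp only [Prod.smul_fst, Prod.smul_snd, smul_eq_mul, RingHom.id_apply, Prod.smul_mk]
    ring_nf
  norm_map' := fun ⟨a, b⟩ => by
    have : |(a + b) / 2| ≤ max |a| |b| := by
      rw [abs_div, abs_two]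
      linarith [abs_add_le a b, le_max_left |a| |b|, le_max_right |a| |b|]
    simp only [LinearMap.coe_mk, AddHom.coe_mk, Prod.norm_def, Real.norm_eq_abs, ← max_assoc,
      max_eq_left this]

@[simp]
theorem midpointEmbedding_apply (x : ℝ × ℝ) :
    midpointEmbedding x = (x.1, x.2, (x.1 + x.2) / 2) := rfl

section

variable {X : Type*} [NormedAddCommGroup X] [NormedSpace ℝ X]

theorem Submodule.exists_norm_eq_one_mem {M : Subspace ℝ X} (hM : M ≠ ⊥) :
    ∃ m ∈ M, ‖m‖ = 1 := by
  have := Submodule.nontrivial_iff_ne_bot.2 hM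
  obtain ⟨m, hm⟩ := exists_norm_eq M zero_le_one
  exact ⟨m, m.2, hm⟩

variable {M N : Subspace ℝ X}

theorem exists_linearIsometry_prod_of_norm_add_eq_max
    (hnorm : ∀ m ∈ M, ∀ n ∈ N, ‖m + n‖ = max ‖m‖ ‖n‖) (hM : M ≠ ⊥) (hN : N ≠ ⊥) :
    ∃ T : ℝ × ℝ →ₗᵢ[ℝ] X, T (1, 0) ∈ M ∧ T (0, 1) ∈ N := by
  obtain ⟨m, hmM, hm⟩ := Submodule.exists_norm_eq_one_mem hM
  obtain ⟨n, hnN, hn⟩ := Submodule.exists_norm_eq_one_mem hN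
  refine ⟨⟨(LinearMap.toSpanSingleton ℝ X m).coprod (LinearMap.toSpanSingleton ℝ X n),
    fun ⟨a, b⟩ => ?_⟩, by simpa using hmM, by simpa using hnN⟩
  simp [hnorm _ (M.smul_mem a hmM) _ (N.smul_mem b hnN), norm_smul, hm, hn, Prod.norm_def]

theorem norm_le_max_norm_sub_of_isCompl (hMN : IsCompl M N)
    (hnorm : ∀ m ∈ M, ∀ n ∈ N, ‖m + n‖ = max ‖m‖ ‖n‖) {m n : X} (hm : m ∈ M) (hn : n ∈ N)
    (g : X) : ‖g‖ ≤ max ‖g - m‖ ‖g - n‖ := by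
  obtain ⟨gM, gN, hgM, hgN, rfl⟩ := Submodule.codisjoint_iff_exists_add_eq.mp hMN.codisjoint g
  have hm' : ‖gM + gN - m‖ = max ‖gM - m‖ ‖gN‖ := by
    rw [add_sub_right_comm, hnorm _ (M.sub_mem hgM hm) _ hgN]
  have hn' : ‖gM + gN - n‖ = max ‖gM‖ ‖gN - n‖ := by
    rw [add_sub_assoc, hnorm _ hgM _ (N.sub_mem hgN hn)]
  rw [hnorm _ hgM _ hgN, hm', hn']
  exact max_le (le_max_of_le_right (le_max_left _ _)) (le_max_of_le_left (le_max_right _ _))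

theorem two_le_one_add_sq_of_isEpsIsometry_of_isCompl (hMN : IsCompl M N)
    (hnorm : ∀ m ∈ M, ∀ n ∈ N, ‖m + n‖ = max ‖m‖ ‖n‖) {ε : ℝ} (hε : 0 ≤ ε)
    {S : ℝ × ℝ × ℝ →ₗ[ℝ] X} (hS : IsEpsIsometry ε S)
    (hu : S (midpointEmbedding (1, 0)) ∈ M) (hv : S (midpointEmbedding (0, 1)) ∈ N) :
    2 ≤ (1 + ε) ^ 2 := by
  set f : ℝ × ℝ × ℝ := (1 / 2, 1 / 2, 1)
  have lower : (1 + ε)⁻¹ ≤ ‖S f‖ := by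
    have hf : ‖f‖ = 1 := by norm_num [f, Prod.norm_def]
    simpa only [hf, mul_one] using (hS f).1
  have upper (x : ℝ × ℝ) (hx : ‖f - midpointEmbedding x‖ = 1 / 2) :
      ‖S f - S (midpointEmbedding x)‖ ≤ (1 + ε) / 2 := by
    simpa only [map_sub, hx, mul_one_div] using (hS (f - midpointEmbedding x)).2
  have h := lower.trans <| (norm_le_max_norm_sub_of_isCompl hMN hnorm hu hv (S f)).trans <|
    max_le (upper _ (by norm_num [f, Prod.norm_def])) (upper _ (by norm_num [f, Prod.norm_def]))
  rw [inv_le_iff_one_le_mul₀ (by positivity)] at h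
  nlinarith

end

theorem separable_gurariy_no_M_summand_general
    (G : Type*) [NormedAddCommGroup G] [NormedSpace ℝ G] (hG : IsGurariy G) :
    ¬ ∃ M N : Subspace ℝ G,
        IsClosed (M : Set G) ∧ IsClosed (N : Set G) ∧
        M ≠ ⊥ ∧ N ≠ ⊥ ∧ IsCompl M N ∧
        ∀ m ∈ M, ∀ n ∈ N, ‖m + n‖ = max ‖m‖ ‖n‖ := by
  rintro ⟨M, N, -, -, hM, hN, hMN, hnorm⟩
  obtain ⟨T, hTM, hTN⟩ := exists_linearIsometry_prod_of_norm_add_eq_max hnorm hM hN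
  obtain ⟨S, hST, hS⟩ := hG.exists_extension (ε := 1 / 10) (by norm_num) midpointEmbedding T
  have := two_le_one_add_sq_of_isEpsIsometry_of_isCompl hMN hnorm (by norm_num) hS
    (by rwa [hST]) (by rwa [hST])
  norm_num at this

/-- A separable Gurariy space `G` has no nontrivial `M`-summand: there are no nonzero
closed subspaces `M, N` of `G` with `G = M ⊕ N` algebraically and
`‖m + n‖ = max ‖m‖ ‖n‖` for all `m ∈ M`, `n ∈ N`. -/
theorem separable_gurariy_no_M_summand
    (G : Type*) [NormedAddCommGroup G] [NormedSpace ℝ G] [CompleteSpace G]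
    [SeparableSpace G] (hG : IsGurariy G) :
    ¬ ∃ M N : Subspace ℝ G,
        IsClosed (M : Set G) ∧ IsClosed (N : Set G) ∧
        M ≠ ⊥ ∧ N ≠ ⊥ ∧ IsCompl M N ∧
        ∀ m ∈ M, ∀ n ∈ N, ‖m + n‖ = max ‖m‖ ‖n‖ :=
  separable_gurariy_no_M_summand_general G hG
end
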